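/- arXiv:1012.2593 — 7 statements merged into one kernel-verified Lean document; each statement's English description precedes it below -/
import Mathlib

section
/- Let p be a polynomial with complex coefficients of degree at least 2, and let Σ' be a finite set of complex numbers such that every z ∈ ℂ with p(z) ∈ Σ' and z ∉ Σ' satisfies p'(z) = 0 (i.e. the preimage p⁻¹(Σ') is contained in Σ' together with critical points of p). Then Σ' has at most 2 elements. -/
/-!
Let `d = deg p ≥ 2` and `n = #S`. Counted with multiplicity, `p⁻¹(S)` has `n d` points. A point
`z` of `p⁻¹(S)` is a root of `p - p(z)` of multiplicity at most one more than its multiplicity as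
a root of `p'`, so `n d ≤ #p⁻¹(S) + (d - 1)`. By hypothesis `p⁻¹(S)` lies in `S` together with the
at most `d - 1` critical points, so `#p⁻¹(S) ≤ n + (d - 1)`. Hence `(n - 2)(d - 1) ≤ 0`.
-/

open Finset

namespace Polynomial

variable {K : Type*} [Field K]

theorem sum_rootMultiplicity_le_card_roots (q : K[X]) (T : Finset K) :
    ∑ z ∈ T, q.rootMultiplicity z ≤ Multiset.card q.roots := by
  classical
  simp_rw [← count_roots]
  calc ∑ z ∈ T, q.roots.count z ≤ ∑ z ∈ T ∪ q.roots.toFinset, q.roots.count z :=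
        sum_le_sum_of_subset subset_union_left
    _ = Multiset.card q.roots :=
        Multiset.sum_count_eq_card fun _ hz => mem_union_right _ (Multiset.mem_toFinset.2 hz)

variable [DecidableEq K]

theorem natDegree_le_card_roots_toFinset_sub_C_add_sum_rootMultiplicity_derivative
    [IsAlgClosed K] [CharZero K] (p : K[X]) (c : K) :
    p.natDegree ≤ #(p - C c).roots.toFinset +
      ∑ z ∈ (p - C c).roots.toFinset, p.derivative.rootMultiplicity z := by
  set F := (p - C c).roots.toFinset
  have hmult (z : K) : (p - C c).rootMultiplicity z ≤ p.derivative.rootMultiplicity z + 1 := by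
    have := rootMultiplicity_sub_one_le_derivative_rootMultiplicity (p - C c) z
    rw [derivative_sub, derivative_C, sub_zero] at this
    omega
  calc p.natDegree = Multiset.card (p - C c).roots := by
        rw [IsAlgClosed.card_roots_eq_natDegree, natDegree_sub_C]
    _ = ∑ z ∈ F, (p - C c).rootMultiplicity z := by
        simp_rw [← Multiset.toFinset_sum_count_eq, count_roots, F]
    _ ≤ ∑ z ∈ F, (p.derivative.rootMultiplicity z + 1) := sum_le_sum fun z _ => hmult z
    _ = #F + ∑ z ∈ F, p.derivative.rootMultiplicity z := by
        rw [sum_add_distrib, card_eq_sum_ones, add_comm]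

/-- This is `p⁻¹(S)` only for nonconstant `p`: for `p = C c` the fiber over `c` is empty, since
`roots 0 = 0`. -/
noncomputable def preimageFinset (p : K[X]) (S : Finset K) : Finset K :=
  S.biUnion fun c => (p - C c).roots.toFinset

theorem eval_mem_of_mem_preimageFinset {p : K[X]} {S : Finset K} {z : K}
    (hz : z ∈ p.preimageFinset S) : p.eval z ∈ S := by
  obtain ⟨c, hc, hzc⟩ := mem_biUnion.1 hz
  rw [Multiset.mem_toFinset, mem_roots', IsRoot.def, eval_sub, eval_C, sub_eq_zero] at hzc
  exact hzc.2 ▸ hc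

theorem pairwiseDisjoint_roots_toFinset_sub_C (p : K[X]) (s : Set K) :
    s.PairwiseDisjoint fun c => (p - C c).roots.toFinset := by
  intro c _ c' _ hcc'
  refine disjoint_left.2 fun z hz hz' => hcc' ?_
  simp only [Multiset.mem_toFinset, mem_roots', IsRoot.def, eval_sub, eval_C, sub_eq_zero] at hz hz'
  exact hz.2.symm.trans hz'.2

theorem card_mul_natDegree_le_card_preimageFinset_add [IsAlgClosed K] [CharZero K]
    (p : K[X]) (S : Finset K) :
    #S * p.natDegree ≤ #(p.preimageFinset S) + (p.natDegree - 1) := by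
  have hdisj := pairwiseDisjoint_roots_toFinset_sub_C p S
  calc #S * p.natDegree = ∑ _c ∈ S, p.natDegree := by rw [sum_const, smul_eq_mul]
    _ ≤ ∑ c ∈ S, (#(p - C c).roots.toFinset +
          ∑ z ∈ (p - C c).roots.toFinset, p.derivative.rootMultiplicity z) :=
        sum_le_sum fun c _ =>
          natDegree_le_card_roots_toFinset_sub_C_add_sum_rootMultiplicity_derivative p c
    _ = #(p.preimageFinset S) +
          ∑ z ∈ p.preimageFinset S, p.derivative.rootMultiplicity z := by
        rw [sum_add_distrib, preimageFinset, card_biUnion hdisj, sum_biUnion hdisj]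
    _ ≤ #(p.preimageFinset S) + (p.natDegree - 1) := by
        grw [sum_rootMultiplicity_le_card_roots, card_roots', natDegree_derivative_le]

theorem card_preimageFinset_le {p : K[X]} (hp' : p.derivative ≠ 0) {S : Finset K}
    (hcrit : ∀ z : K, p.eval z ∈ S → z ∉ S → p.derivative.eval z = 0) :
    #(p.preimageFinset S) ≤ #S + (p.natDegree - 1) := by
  have hsub : p.preimageFinset S ⊆ S ∪ p.derivative.roots.toFinset := by
    intro z hz
    by_cases hzS : z ∈ S
    · exact mem_union_left _ hzS
    · exact mem_union_right _ <| Multiset.mem_toFinset.2 <|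
        (mem_roots hp').2 (hcrit z (eval_mem_of_mem_preimageFinset hz) hzS)
  calc #(p.preimageFinset S) ≤ #S + #p.derivative.roots.toFinset :=
        (card_le_card hsub).trans (card_union_le _ _)
    _ ≤ #S + (p.natDegree - 1) := by
        grw [Multiset.toFinset_card_le, card_roots', natDegree_derivative_le]

end Polynomial

/-- Polynomial case of the exceptional-set lemma: if `S` is a finite set of complex
numbers such that every preimage of `S` under a polynomial `p` of degree at least `2`
either lies in `S` or is a critical point of `p`, then `S` has at most two elements. -/
theorem polynomial_exceptional_set_card_le_two
    (p : Polynomial ℂ) (hdeg : 2 ≤ p.natDegree) (S : Finset ℂ)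
    (hinv : ∀ z : ℂ, p.eval z ∈ S → z ∉ S → p.derivative.eval z = 0) :
    S.card ≤ 2 := by
  classical
  have hp' : p.derivative ≠ 0 := mt Polynomial.derivative_eq_zero.1 (by omega)
  have hlower := p.card_mul_natDegree_le_card_preimageFinset_add S
  have hupper := Polynomial.card_preimageFinset_le hp' hinv
  obtain ⟨e, he⟩ : ∃ e, p.natDegree = e + 2 := ⟨p.natDegree - 2, by omega⟩
  rw [he] at hlower hupper
  have : #S * (e + 2) ≤ #S + 2 * (e + 1) := by omega
  nlinarith
end

section
/- Let X be a metric space, C a natural number, and S : ℕ → Finset X a sequence of finite subsets of X with (S n).card ≤ C for every n. Then the set of points z ∈ X such that either z ∈ S n for some n, or there exists β ∈ (0,1) such that for every N there exist n ≥ N and y ∈ S n with dist(z, y) ≤ β^n, has Hausdorff dimension 0. -/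
/-!
A point that is not safe lies in some `S n`, which gives a countable set, or, for some rational
`β < 1`, in infinitely many of the balls `B(y, β ^ n)` with `y ∈ S n`. Since `#S n ≤ C`, these
balls satisfy `∑ diam ^ d ≤ C ∑ (2 β ^ n) ^ d < ∞` for every `d > 0`, so by the
Hausdorff–Cantelli lemma the points lying in infinitely many of them form a `μH[d]`-null set.
-/

open MeasureTheory Filter Set Metric
open scoped ENNReal NNReal Topology

theorem hausdorffMeasure_setOf_infinite_mem_eq_zero {X ι : Type*} [EMetricSpace X]
    [MeasurableSpace X] [BorelSpace X] [Countable ι] {s : ι → Set X} {d : ℝ} (hd : 0 < d)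
    (hs : ∑' i, ediam (s i) ^ d ≠ ∞) :
    μH[d] {x | {i | x ∈ s i}.Infinite} = 0 := by
  set tail : Finset ι → ℝ≥0∞ := fun F => ∑' i : {i // i ∉ F}, ediam (s i) ^ d
  have htail : Tendsto tail atTop (𝓝 0) := ENNReal.tendsto_tsum_compl_atTop_zero hs
  have hradius : Tendsto (fun F => tail F ^ d⁻¹) atTop (𝓝 0) := by
    simpa [ENNReal.zero_rpow_of_pos (inv_pos.2 hd)] using htail.ennrpow_const d⁻¹
  have hdiam : ∀ F, ∀ i : {i // i ∉ F}, ediam (s i) ≤ tail F ^ d⁻¹ := fun F i =>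
    (ENNReal.le_rpow_inv_iff hd).2 (ENNReal.le_tsum i)
  have hcover :
      ∀ F : Finset ι, {x | {i | x ∈ s i}.Infinite} ⊆ ⋃ i : {i // i ∉ F}, s i := by
    intro F x hx
    obtain ⟨i, hxi, hiF⟩ := hx.exists_notMem_finset F
    exact mem_iUnion.2 ⟨⟨i, hiF⟩, hxi⟩
  refine le_antisymm ?_ zero_le
  calc μH[d] {x | {i | x ∈ s i}.Infinite}
      ≤ liminf tail atTop :=
        Measure.hausdorffMeasure_le_liminf_tsum d _ _ hradius (fun F (i : {i // i ∉ F}) => s i)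
          (Eventually.of_forall hdiam) (Eventually.of_forall hcover)
    _ = 0 := htail.liminf_eq

theorem dimH_eq_zero_of_hausdorffMeasure_eq_zero {X : Type*} [EMetricSpace X]
    [MeasurableSpace X] [BorelSpace X] {s : Set X} (h : ∀ d : ℝ≥0, 0 < d → μH[d] s = 0) :
    dimH s = 0 := by
  refine nonpos_iff_eq_zero.1 (ENNReal.le_of_forall_pos_le_add fun ε hε _ => ?_)
  simpa using dimH_le_of_hausdorffMeasure_ne_top ((h ε hε).trans_ne ENNReal.zero_ne_top)

section FrequentlyClose

variable {X : Type*} [PseudoMetricSpace X]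

def frequentlyClose (S : ℕ → Finset X) (β : ℝ) : Set X :=
  {z | ∀ N : ℕ, ∃ n, N ≤ n ∧ ∃ y ∈ S n, dist z y ≤ β ^ n}

variable {S : ℕ → Finset X}

theorem frequentlyClose_mono {β γ : ℝ} (hβ : 0 ≤ β) (hβγ : β ≤ γ) :
    frequentlyClose S β ⊆ frequentlyClose S γ := fun z hz N => by
  obtain ⟨n, hn, y, hy, hzy⟩ := hz N
  exact ⟨n, hn, y, hy, hzy.trans (pow_le_pow_left₀ hβ hβγ n)⟩

theorem frequentlyClose_subset_setOf_infinite_mem (β : ℝ) :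
    frequentlyClose S β ⊆
      {z | {i : Σ n, S n | z ∈ closedEBall (i.2 : X) (ENNReal.ofReal (β ^ i.1))}.Infinite} := by
  intro z hz
  refine Set.Infinite.of_image Sigma.fst (infinite_of_not_bddAbove ?_)
  refine not_bddAbove_iff.2 fun N => ?_
  obtain ⟨n, hn, y, hy, hzy⟩ := hz (N + 1)
  refine ⟨n, ⟨⟨n, y, hy⟩, ?_, rfl⟩, hn⟩
  change edist z y ≤ _
  rw [edist_dist]
  exact ENNReal.ofReal_le_ofReal hzy

theorem tsum_ediam_closedEBall_rpow_ne_top (C : ℕ) (hcard : ∀ n, (S n).card ≤ C) {β : ℝ}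
    (hβ0 : 0 ≤ β) (hβ1 : β < 1) {d : ℝ} (hd : 0 < d) :
    ∑' i : Σ n, S n, ediam (closedEBall (i.2 : X) (ENNReal.ofReal (β ^ i.1))) ^ d ≠ ∞ := by
  set q := ENNReal.ofReal β ^ d
  have hq : q < 1 := ENNReal.rpow_lt_one (ENNReal.ofReal_lt_one.2 hβ1) hd
  have hterm : ∀ (n : ℕ) (y : X),
      ediam (closedEBall y (ENNReal.ofReal (β ^ n))) ^ d ≤ 2 ^ d * q ^ n := by
    intro n y
    calc ediam (closedEBall y (ENNReal.ofReal (β ^ n))) ^ d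
        ≤ (2 * ENNReal.ofReal β ^ n) ^ d := by
          rw [← ENNReal.ofReal_pow hβ0]
          exact ENNReal.rpow_le_rpow ediam_closedEBall_le hd.le
      _ = 2 ^ d * q ^ n := by
          rw [ENNReal.mul_rpow_of_nonneg _ _ hd.le, ← ENNReal.rpow_natCast_mul,
            mul_comm (n : ℝ) d, ENNReal.rpow_mul_natCast]
  have hfiber : ∀ n, ∑' _ : S n, 2 ^ d * q ^ n ≤ C * (2 ^ d * q ^ n) := by
    intro n
    rw [tsum_fintype, Finset.sum_const, Finset.card_univ, Fintype.card_coe, nsmul_eq_mul]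
    gcongr
    exact_mod_cast hcard n
  refine ne_top_of_le_ne_top ?_ (ENNReal.tsum_le_tsum fun i => hterm i.1 i.2)
  rw [ENNReal.tsum_sigma']
  refine ne_top_of_le_ne_top ?_ (ENNReal.tsum_le_tsum hfiber)
  rw [ENNReal.tsum_mul_left, ENNReal.tsum_mul_left]
  exact ENNReal.mul_ne_top (ENNReal.natCast_ne_top C)
    (ENNReal.mul_ne_top (by simp) (tsum_geometric_lt_top.2 hq).ne)

end FrequentlyClose

theorem dimH_frequentlyClose_eq_zero {X : Type*} [MetricSpace X] {S : ℕ → Finset X} (C : ℕ)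
    (hcard : ∀ n, (S n).card ≤ C) {β : ℝ} (hβ0 : 0 ≤ β) (hβ1 : β < 1) :
    dimH (frequentlyClose S β) = 0 := by
  borelize X
  refine dimH_eq_zero_of_hausdorffMeasure_eq_zero fun d hd => ?_
  exact measure_mono_null (frequentlyClose_subset_setOf_infinite_mem β)
    (hausdorffMeasure_setOf_infinite_mem_eq_zero hd
      (tsum_ediam_closedEBall_rpow_ne_top C hcard hβ0 hβ1 hd))

/-- The set of points that fail to be "safe" with respect to a sequence of finite sets
`S n` of uniformly bounded cardinality (i.e., points lying in some `S n`, or points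
within distance `β^n` of `S n` for infinitely many `n`, for some `β ∈ (0,1)`) has
Hausdorff dimension zero. -/
theorem dimH_not_safe_eq_zero
    {X : Type*} [MetricSpace X] (C : ℕ) (S : ℕ → Finset X)
    (hcard : ∀ n, (S n).card ≤ C) :
    dimH {z : X | (∃ n, z ∈ S n) ∨
      ∃ β ∈ Set.Ioo (0 : ℝ) 1, ∀ N : ℕ, ∃ n, N ≤ n ∧ ∃ y ∈ S n, dist z y ≤ β ^ n} = 0 := by
  have hsub : {z : X | (∃ n, z ∈ S n) ∨ ∃ β ∈ Ioo (0 : ℝ) 1, z ∈ frequentlyClose S β} ⊆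
      (⋃ n, (S n : Set X)) ∪ ⋃ q : ℚ, ⋃ (_ : (q : ℝ) ∈ Ioo 0 1), frequentlyClose S q := by
    rintro z (⟨n, hn⟩ | ⟨β, ⟨hβ0, hβ1⟩, hz⟩)
    · exact Or.inl (mem_iUnion.2 ⟨n, hn⟩)
    · obtain ⟨q, hβq, hq1⟩ := exists_rat_btwn hβ1
      exact Or.inr (mem_iUnion₂.2
        ⟨q, ⟨hβ0.trans hβq, hq1⟩, frequentlyClose_mono hβ0.le hβq.le hz⟩)
  refine nonpos_iff_eq_zero.1 ((dimH_mono hsub).trans ?_)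
  simp only [dimH_union, dimH_iUnion, dimH_coe_finset, ciSup_const, max_le_iff, le_refl,
    true_and]
  exact iSup₂_le fun q hq => (dimH_frequentlyClose_eq_zero C hcard hq.1.le hq.2).le
end

section
/- Let f : ℂ → ℂ be analytic at a point c ∈ ℂ, and suppose the function z ↦ f(z) − f(c) vanishes at c to finite order d with 1 ≤ d (i.e. its order of vanishing as an analytic germ at c equals d). Then there exist r > 0 and C ≥ 1 such that for every z with dist(z, c) < r: C⁻¹·dist(z,c)^d ≤ dist(f(z), f(c)) ≤ C·dist(z,c)^d, and C⁻¹·dist(z,c)^{d−1} ≤ ‖deriv f z‖ ≤ C·dist(z,c)^{d−1}. -/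
/-!
Write `f z - f c = (z - c) ^ d * g z` with `g` analytic and `g c ≠ 0`. Since `g` is continuous
and nonzero at `c`, `‖g‖` is pinched between two positive constants near `c`, which gives the
first estimate. The derivative `deriv f` is again analytic at `c`, of order `d - 1`, so the same
argument applies to it.
-/

open Filter Topology

theorem ContinuousAt.exists_eventually_norm_mem_Icc {X E : Type*} [TopologicalSpace X]
    [NormedAddCommGroup E] {g : X → E} {c : X} (hg : ContinuousAt g c) (hgc : g c ≠ 0) :
    ∃ K : ℝ, 1 ≤ K ∧ ∀ᶠ x in 𝓝 c, K⁻¹ ≤ ‖g x‖ ∧ ‖g x‖ ≤ K := by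
  set a := ‖g c‖
  have ha : 0 < a := norm_pos_iff.mpr hgc
  set K := max 1 (max (2 * a) (2 / a))
  have hK_inv : K⁻¹ ≤ a / 2 := by
    rw [← inv_div]
    exact inv_anti₀ (by positivity) ((le_max_right _ _).trans (le_max_right _ _))
  have hK : 2 * a ≤ K := (le_max_left _ _).trans (le_max_right _ _)
  have hnear : ∀ᶠ x in 𝓝 c, ‖g x‖ ∈ Set.Ioo (a / 2) (2 * a) :=
    hg.norm (Ioo_mem_nhds (by linarith) (by linarith))
  refine ⟨K, le_max_left _ _, hnear.mono fun x hx => ⟨?_, ?_⟩⟩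
  · linarith [hx.1]
  · linarith [hx.2]

theorem AnalyticAt.exists_eventually_norm_comparable_pow {𝕜 E : Type*}
    [NontriviallyNormedField 𝕜] [NormedAddCommGroup E] [NormedSpace 𝕜 E] {F : 𝕜 → E} {c : 𝕜}
    {n : ℕ} (hF : AnalyticAt 𝕜 F c) (hn : analyticOrderAt F c = n) :
    ∃ K : ℝ, 1 ≤ K ∧ ∀ᶠ z in 𝓝 c, K⁻¹ * ‖z - c‖ ^ n ≤ ‖F z‖ ∧ ‖F z‖ ≤ K * ‖z - c‖ ^ n := by
  obtain ⟨g, hg, hgc, hFg⟩ := hF.analyticOrderAt_eq_natCast.mp hn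
  obtain ⟨K, hK, hgK⟩ := hg.continuousAt.exists_eventually_norm_mem_Icc hgc
  refine ⟨K, hK, ?_⟩
  filter_upwards [hFg, hgK] with z hz ⟨hlow, hupp⟩
  have hpow : 0 ≤ ‖z - c‖ ^ n := by positivity
  rw [hz, norm_smul, norm_pow]
  constructor
  · rw [mul_comm]; exact mul_le_mul_of_nonneg_left hlow hpow
  · rw [mul_comm]; exact mul_le_mul_of_nonneg_right hupp hpow

theorem inv_mul_le_and_le_mul_of_le {K C u v : ℝ} (hK : 0 < K) (hKC : K ≤ C) (hu : 0 ≤ u)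
    (h : K⁻¹ * u ≤ v ∧ v ≤ K * u) : C⁻¹ * u ≤ v ∧ v ≤ C * u :=
  ⟨le_trans (mul_le_mul_of_nonneg_right (inv_anti₀ hK hKC) hu) h.1,
    h.2.trans (mul_le_mul_of_nonneg_right hKC hu)⟩

theorem local_degree_asymptotics_general
    (f : ℂ → ℂ) (c : ℂ) (hf : AnalyticAt ℂ f c) (d : ℕ) (hd : 1 ≤ d)
    (hord : analyticOrderAt (fun z => f z - f c) c = (d : ℕ∞)) :
    ∃ r > 0, ∃ C : ℝ, 1 ≤ C ∧ ∀ z : ℂ, dist z c < r →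
      (C⁻¹ * dist z c ^ d ≤ dist (f z) (f c) ∧ dist (f z) (f c) ≤ C * dist z c ^ d) ∧
      (C⁻¹ * dist z c ^ (d - 1) ≤ ‖deriv f z‖ ∧ ‖deriv f z‖ ≤ C * dist z c ^ (d - 1)) := by
  have hord' : analyticOrderAt (deriv f) c = (d - 1 : ℕ) := by
    have h := hf.analyticOrderAt_deriv_add_one
    rw [hord, ← Nat.sub_add_cancel hd, Nat.cast_add, Nat.cast_one] at h
    exact WithTop.add_right_cancel ENat.one_ne_top h
  obtain ⟨K₁, hK₁, h₁⟩ := (hf.sub analyticAt_const).exists_eventually_norm_comparable_pow hord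
  obtain ⟨K₂, hK₂, h₂⟩ := hf.deriv.exists_eventually_norm_comparable_pow hord'
  obtain ⟨r, hr, hball⟩ := Metric.eventually_nhds_iff.mp (h₁.and h₂)
  refine ⟨r, hr, max K₁ K₂, hK₁.trans (le_max_left _ _), fun z hz => ?_⟩
  obtain ⟨hz₁, hz₂⟩ := hball hz
  rw [dist_eq_norm z, dist_eq_norm (f z)]
  exact ⟨inv_mul_le_and_le_mul_of_le (by linarith) (le_max_left _ _) (by positivity) hz₁,
    inv_mul_le_and_le_mul_of_le (by linarith) (le_max_right _ _) (by positivity) hz₂⟩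

/-- Local-degree asymptotics: if `f` is analytic at `c` and `z ↦ f z - f c` vanishes at
`c` to finite order `d ≥ 1`, then near `c` one has
`dist (f z) (f c) ∼ dist z c ^ d` and `‖deriv f z‖ ∼ dist z c ^ (d-1)`,
up to a multiplicative constant. -/
theorem local_degree_asymptotics
    (f : ℂ → ℂ) (c : ℂ) (hf : AnalyticAt ℂ f c) (d : ℕ) (hd : 1 ≤ d)
    (hA : AnalyticAt ℂ (fun z => f z - f c) c) (hord : analyticOrderAt (fun z => f z - f c) c = (d : ℕ∞)) :
    ∃ r > 0, ∃ C : ℝ, 1 ≤ C ∧ ∀ z : ℂ, dist z c < r →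
      (C⁻¹ * dist z c ^ d ≤ dist (f z) (f c) ∧ dist (f z) (f c) ≤ C * dist z c ^ d) ∧
      (C⁻¹ * dist z c ^ (d - 1) ≤ ‖deriv f z‖ ∧ ‖deriv f z‖ ≤ C * dist z c ^ (d - 1)) :=
  local_degree_asymptotics_general f c hf d hd hord
end

section
/- Let g : ℂ → ℂ be entire, let p ∈ ℂ satisfy g(p) = p, and suppose λ := ‖deriv g p‖ > 1. Then for every σ with 1 < σ < λ there exists δ > 0 such that for every x ∈ ℂ and every integer m ≥ 1, if g^[j](x) ∈ closedBall(p, δ) for every j < m, then dist(x, p) ≤ δ·σ^{−(m−1)} and ‖deriv (g^[m]) x‖ ≥ σ^m. -/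
/-! Near a fixed point `p` with `σ < ‖g' p‖`, both `‖g'‖ ≥ σ` (continuity of `g'`) and
`|g y - p| ≥ σ |y - p|` (the difference quotient at `p` tends to `g' p`). Along an orbit that
stays in such a neighbourhood, the distance to `p` is multiplied by at least `σ` at each step,
which bounds the starting distance by `δ σ^{-(m-1)}`; and by the chain rule `(g^[m])'` is a
product of `m` factors of norm at least `σ`. -/

open Filter Topology Metric

theorem pow_mul_dist_le_dist_iterate {X : Type*} [PseudoMetricSpace X] {g : X → X} {p : X}
    {s : Set X} {σ : ℝ} (hσ : 0 ≤ σ) (hexp : ∀ y ∈ s, σ * dist y p ≤ dist (g y) p) {x : X} :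
    ∀ k : ℕ, (∀ j < k, g^[j] x ∈ s) → σ ^ k * dist x p ≤ dist (g^[k] x) p
  | 0, _ => by simp
  | k + 1, horb => by
    rw [Function.iterate_succ_apply', pow_succ', mul_assoc]
    calc σ * (σ ^ k * dist x p) ≤ σ * dist (g^[k] x) p :=
          mul_le_mul_of_nonneg_left (pow_mul_dist_le_dist_iterate hσ hexp k
            fun j hj => horb j (hj.trans k.lt_succ_self)) hσ
      _ ≤ dist (g (g^[k] x)) p := hexp _ (horb k k.lt_succ_self)

section NormedField

variable {𝕜 : Type*} [NontriviallyNormedField 𝕜] {g : 𝕜 → 𝕜} {s : Set 𝕜} {σ : ℝ}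

theorem pow_le_norm_deriv_iterate (hg : Differentiable 𝕜 g) (hσ : 0 ≤ σ)
    (hder : ∀ y ∈ s, σ ≤ ‖deriv g y‖) {x : 𝕜} :
    ∀ k : ℕ, (∀ j < k, g^[j] x ∈ s) → σ ^ k ≤ ‖deriv g^[k] x‖
  | 0, _ => by simp
  | k + 1, horb => by
    have hk : σ ≤ ‖deriv g (g^[k] x)‖ := hder _ (horb k k.lt_succ_self)
    rw [Function.iterate_succ', deriv_comp x (hg _) ((hg.iterate k) x), norm_mul, pow_succ']
    exact mul_le_mul hk (pow_le_norm_deriv_iterate hg hσ hder k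
      fun j hj => horb j (hj.trans k.lt_succ_self)) (by positivity) (hσ.trans hk)

theorem eventually_mul_dist_le_dist_of_lt_norm_deriv {p : 𝕜} (hg : DifferentiableAt 𝕜 g p)
    (hσ : σ < ‖deriv g p‖) : ∀ᶠ y in 𝓝 p, σ * dist y p ≤ dist (g y) (g p) := by
  have hslope : ∀ᶠ y in 𝓝[≠] p, σ < ‖slope g p y‖ :=
    (hasDerivAt_iff_tendsto_slope.mp hg.hasDerivAt).norm.eventually (eventually_gt_nhds hσ)
  filter_upwards [eventually_nhdsWithin_iff.mp hslope] with y hy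
  rcases eq_or_ne y p with rfl | hne
  · simp
  · have hquot : g y - g p = slope g p y * (y - p) := by
      rw [slope_def_field, div_mul_cancel₀ _ (sub_ne_zero.mpr hne)]
    rw [dist_eq_norm, dist_eq_norm, hquot, norm_mul]
    exact mul_le_mul_of_nonneg_right (hy hne).le (norm_nonneg _)

end NormedField

theorem repelling_fixed_point_orbit_estimate_general
    (g : ℂ → ℂ) (hg : Differentiable ℂ g) (p : ℂ) (hfix : g p = p) :
    ∀ σ : ℝ, 1 < σ → σ < ‖deriv g p‖ →
      ∃ δ > 0, ∀ x : ℂ, ∀ m : ℕ, 1 ≤ m →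
        (∀ j < m, g^[j] x ∈ Metric.closedBall p δ) →
        dist x p ≤ δ * σ ^ (-((m : ℤ) - 1)) ∧ σ ^ m ≤ ‖deriv (g^[m]) x‖ := by
  intro σ hσ1 hσlt
  have hσ0 : 0 ≤ σ := zero_le_one.trans hσ1.le
  have hcont : Continuous (deriv g) := (hg.contDiff (n := 2)).continuous_deriv one_le_two
  have hderiv : ∀ᶠ y in 𝓝 p, σ ≤ ‖deriv g y‖ :=
    (hcont.norm.continuousAt.eventually (eventually_gt_nhds hσlt)).mono fun _ => le_of_lt
  have hexp : ∀ᶠ y in 𝓝 p, σ * dist y p ≤ dist (g y) p := by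
    simpa only [hfix] using eventually_mul_dist_le_dist_of_lt_norm_deriv (hg p) hσlt
  obtain ⟨δ, hδ, hball⟩ := nhds_basis_closedBall.eventually_iff.mp (hderiv.and hexp)
  refine ⟨δ, hδ, fun x m hm horb => ⟨?_,
    pow_le_norm_deriv_iterate hg hσ0 (fun y hy => (hball hy).1) m horb⟩⟩
  obtain ⟨n, rfl⟩ := Nat.exists_eq_add_of_le' hm
  have hfar : σ ^ n * dist x p ≤ dist (g^[n] x) p :=
    pow_mul_dist_le_dist_iterate hσ0 (fun y hy => (hball hy).2) n fun j hj => horb j (by omega)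
  have hlast : dist (g^[n] x) p ≤ δ := horb n (by omega)
  rw [show -(((n + 1 : ℕ) : ℤ) - 1) = -(n : ℤ) by push_cast; ring, zpow_neg, zpow_natCast,
    ← div_eq_mul_inv, le_div_iff₀ (by positivity), mul_comm]
  exact hfar.trans hlast

/-- Basic estimate for orbits of an entire map staying near a repelling fixed point:
for `1 < σ < λ = ‖deriv g p‖` there is `δ > 0` such that if the first `m` points of the
orbit of `x` stay in the closed `δ`-ball around `p`, then `dist x p ≤ δ·σ^{-(m-1)}` and
`‖deriv (g^[m]) x‖ ≥ σ^m`. -/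
theorem repelling_fixed_point_orbit_estimate
    (g : ℂ → ℂ) (hg : Differentiable ℂ g) (p : ℂ) (hfix : g p = p)
    (hrep : 1 < ‖deriv g p‖) :
    ∀ σ : ℝ, 1 < σ → σ < ‖deriv g p‖ →
      ∃ δ > 0, ∀ x : ℂ, ∀ m : ℕ, 1 ≤ m →
        (∀ j < m, g^[j] x ∈ Metric.closedBall p δ) →
        dist x p ≤ δ * σ ^ (-((m : ℤ) - 1)) ∧ σ ^ m ≤ ‖deriv (g^[m]) x‖ :=
  repelling_fixed_point_orbit_estimate_general g hg p hfix
end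

section
/- Let a : ℕ → ℝ and define S(m) = ∑_{j < m} a(j). Let χ ∈ ℝ, ε > 0, t ∈ (0,1), and let n ≥ 1 be an integer such that S(n) ≥ n·(χ − t·ε) and S(m) ≤ m·(χ + t·ε) for every integer m with 1 ≤ m < n. Then there exists an integer n' with 1 ≤ n' ≤ n and (n' : ℝ) ≥ n·(1−t)/(1+t) such that S(n') − S(m) ≥ (n' − m)·(χ − ε) for every integer m < n'. -/
/-!
Let `n'` maximize `A m = S m - m (χ - ε)` over `0 ≤ m ≤ n`; maximality says exactly that `n'` is
a Pliss time of exponent `χ - ε`. Since `A n ≥ n ε (1 - t) > 0 = A 0`, we have `n' ≥ 1`, and if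
`n' < n` then `n' ε (1 + t) ≥ A n' ≥ A n ≥ n ε (1 - t)`.
-/

open Finset

variable {R : Type*} [CommRing R] [LinearOrder R] [IsStrictOrderedRing R]

def IsPlissTime (S : ℕ → R) (c : R) (k : ℕ) : Prop :=
  ∀ m < k, ((k : R) - m) * c ≤ S k - S m

theorem exists_le_isPlissTime (S : ℕ → R) (c : R) (n : ℕ) :
    ∃ k ≤ n, IsPlissTime S c k ∧ S n - n * c ≤ S k - k * c := by
  obtain ⟨k, hk, hmax⟩ := exists_max_image (range (n + 1)) (fun m => S m - m * c) ⟨0, by simp⟩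
  have hkn : k ≤ n := Nat.lt_succ_iff.mp (mem_range.mp hk)
  refine ⟨k, hkn, fun m hm => ?_, hmax n (by simp)⟩
  linarith [hmax m (mem_range.mpr (by omega))]

theorem exists_isPlissTime_of_gap_bounds (S : ℕ → R) (hS0 : S 0 = 0) (c α β : R) (hα : 0 < α)
    (hαβ : α ≤ β) (n : ℕ) (hn : 1 ≤ n) (hSn : n * α ≤ S n - n * c)
    (hSm : ∀ m, 1 ≤ m → m < n → S m - m * c ≤ m * β) :
    ∃ k, 1 ≤ k ∧ k ≤ n ∧ n * α ≤ k * β ∧ IsPlissTime S c k := by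
  obtain ⟨k, hkn, hk, hmax⟩ := exists_le_isPlissTime S c n
  have hnα : 0 < (n : R) * α := mul_pos (by exact_mod_cast hn) hα
  have hk1 : 1 ≤ k := Nat.one_le_iff_ne_zero.mpr <| by
    rintro rfl
    simp only [hS0, Nat.cast_zero, zero_mul, sub_zero] at hmax
    linarith
  refine ⟨k, hk1, hkn, ?_, hk⟩
  rcases hkn.eq_or_lt with rfl | hlt
  · exact mul_le_mul_of_nonneg_left hαβ (Nat.cast_nonneg k)
  · linarith [hSm k hk1 hlt]

/-- Pliss hyperbolic times: if the Birkhoff sum `S n` is at least `n(χ - tε)` while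
`S m ≤ m(χ + tε)` for all `1 ≤ m < n`, then there is a Pliss hyperbolic time
`n' ≤ n` with exponent `χ - ε` satisfying `n' ≥ n(1-t)/(1+t)`. -/
theorem pliss_hyperbolic_time
    (a : ℕ → ℝ) (χ ε t : ℝ) (hε : 0 < ε) (ht : t ∈ Set.Ioo (0 : ℝ) 1)
    (n : ℕ) (hn : 1 ≤ n)
    (hSn : (n : ℝ) * (χ - t * ε) ≤ ∑ j ∈ Finset.range n, a j)
    (hSm : ∀ m : ℕ, 1 ≤ m → m < n → ∑ j ∈ Finset.range m, a j ≤ (m : ℝ) * (χ + t * ε)) :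
    ∃ n' : ℕ, 1 ≤ n' ∧ n' ≤ n ∧ (n : ℝ) * (1 - t) / (1 + t) ≤ (n' : ℝ) ∧
      ∀ m : ℕ, m < n' →
        ((n' : ℝ) - (m : ℝ)) * (χ - ε) ≤
          (∑ j ∈ Finset.range n', a j) - ∑ j ∈ Finset.range m, a j := by
  obtain ⟨ht0, ht1⟩ := ht
  obtain ⟨k, hk1, hkn, hbound, hk⟩ :=
    exists_isPlissTime_of_gap_bounds (fun m => ∑ j ∈ range m, a j) (by simp) (χ - ε) (ε * (1 - t))
      (ε * (1 + t)) (mul_pos hε (by linarith)) (mul_le_mul_of_nonneg_left (by linarith) hε.le)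
      n hn (by linarith) (fun m hm1 hmn => by linarith [hSm m hm1 hmn])
  refine ⟨k, hk1, hkn, ?_, hk⟩
  rw [div_le_iff₀ (by linarith)]
  exact le_of_mul_le_mul_left (by linarith) hε
end

section
/- Let X be a metric space, f : X → X a map, Σ₀ ⊆ X a finite set with f(Σ₀) ⊆ Σ₀, and r > 0 such that for every p ∈ Σ₀: f is injective on ball(p, r), and f(ball(p, r)) is disjoint from ball(q, r) for every q ∈ Σ₀ with q ≠ f(p). Then for every integer ℓ ≥ 1, every x ∈ X, and all p, p' ∈ Σ₀, there is at most one point y ∈ X such that f^[ℓ](y) = x, y ∈ ball(p, r), f^[ℓ−1](y) ∈ ball(p', r), and f^[j](y) ∈ ⋃_{q ∈ Σ₀} ball(q, r) for every j < ℓ. -/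
/-!
A backward branch that starts in `B(p, r)` and stays near `E` is forced, by the disjointness
hypothesis, to follow the orbit of `p` ball by ball; along that orbit `f^[ℓ]` is a composition of
maps injective on the balls, hence injective.
-/

open Function Set

section BackwardBranches

variable {α : Type*} {f : α → α}

theorem injOn_iterate_of_forall_injOn {U : ℕ → Set α} (hinj : ∀ j, InjOn f (U j)) :
    ∀ n, InjOn f^[n] {z | ∀ j < n, f^[j] z ∈ U j}
  | 0 => injective_id.injOn
  | n + 1 => by
    intro z hz z' hz' heq
    rw [iterate_succ_apply', iterate_succ_apply'] at heq
    have hprefix : ∀ {w}, w ∈ {z | ∀ j < n + 1, f^[j] z ∈ U j} →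
        w ∈ {z | ∀ j < n, f^[j] z ∈ U j} :=
      fun hw j hj => hw j (Nat.lt_succ_of_lt hj)
    exact injOn_iterate_of_forall_injOn hinj n (hprefix hz) (hprefix hz')
      (hinj n (hz n n.lt_succ_self) (hz' n n.lt_succ_self) heq)

/-- At each step `f '' U (f^[j] p)` meets no `U q` other than `U (f^[j+1] p)`. -/
theorem iterate_mem_of_forall_exists_mem {E : Set α} {U : α → Set α} (hinv : MapsTo f E E)
    (hdisj : ∀ p ∈ E, ∀ q ∈ E, q ≠ f p → Disjoint (f '' U p) (U q))
    {p z : α} (hp : p ∈ E) (hz : z ∈ U p) {ℓ : ℕ}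
    (horb : ∀ j < ℓ, ∃ q ∈ E, f^[j] z ∈ U q) :
    ∀ j < ℓ, f^[j] z ∈ U (f^[j] p)
  | 0, _ => hz
  | j + 1, hj => by
    obtain ⟨q, hqE, hzq⟩ := horb (j + 1) hj
    have himage : f^[j + 1] z ∈ f '' U (f^[j] p) := by
      rw [iterate_succ_apply']
      exact mem_image_of_mem f
        (iterate_mem_of_forall_exists_mem hinv hdisj hp hz horb j (Nat.lt_of_succ_lt hj))
    have hq : q = f^[j + 1] p := by
      by_contra hne
      rw [iterate_succ_apply'] at hne
      exact disjoint_left.mp (hdisj _ (hinv.iterate j hp) q hqE hne) himage hzq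
    exact hq ▸ hzq

end BackwardBranches

theorem unique_backward_branch_near_invariant_set_general
    {X : Type*} [MetricSpace X] (f : X → X) (E : Finset X)
    (hinv : ∀ p ∈ E, f p ∈ E) (r : ℝ)
    (hinj : ∀ p ∈ E, Set.InjOn f (Metric.ball p r))
    (hdisj : ∀ p ∈ E, ∀ q ∈ E, q ≠ f p →
      Disjoint (f '' Metric.ball p r) (Metric.ball q r)) :
    ∀ ℓ : ℕ, 1 ≤ ℓ → ∀ x : X, ∀ p ∈ E, ∀ p' ∈ E,
      {y : X | f^[ℓ] y = x ∧ y ∈ Metric.ball p r ∧ f^[ℓ - 1] y ∈ Metric.ball p' r ∧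
        ∀ j < ℓ, ∃ q ∈ E, f^[j] y ∈ Metric.ball q r}.Subsingleton := by
  intro ℓ _ x p hp _ _ y ⟨hyx, hyp, _, hyorb⟩ y' ⟨hy'x, hy'p, _, hy'orb⟩
  have hmaps : MapsTo f (E : Set X) E := hinv
  have hshadow : ∀ z ∈ Metric.ball p r, (∀ j < ℓ, ∃ q ∈ E, f^[j] z ∈ Metric.ball q r) →
      ∀ j < ℓ, f^[j] z ∈ Metric.ball (f^[j] p) r :=
    fun _ hz horb =>
      iterate_mem_of_forall_exists_mem (U := (Metric.ball · r)) hmaps hdisj hp hz horb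
  exact injOn_iterate_of_forall_injOn (fun j => hinj _ (hmaps.iterate j hp)) ℓ
    (hshadow y hyp hyorb) (hshadow y' hy'p hy'orb) (hyx.trans hy'x.symm)

/-- Uniqueness of backward branches staying near the invariant finite set `E`:
if `f` is injective on each ball `B(p, r)`, `p ∈ E`, and `f(B(p, r))` is disjoint
from `B(q, r)` for every `q ∈ E` with `q ≠ f p`, then for each `ℓ ≥ 1`, each `x`,
and each pair `p, p' ∈ E` there is at most one preimage `y ∈ f^{-ℓ}(x)` with
`y ∈ B(p, r)`, `f^[ℓ-1] y ∈ B(p', r)`, whose whole orbit up to time `ℓ - 1` stays in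
the union of the balls around `E`. -/
theorem unique_backward_branch_near_invariant_set
    {X : Type*} [MetricSpace X] (f : X → X) (E : Finset X)
    (hinv : ∀ p ∈ E, f p ∈ E) (r : ℝ) (hr : 0 < r)
    (hinj : ∀ p ∈ E, Set.InjOn f (Metric.ball p r))
    (hdisj : ∀ p ∈ E, ∀ q ∈ E, q ≠ f p →
      Disjoint (f '' Metric.ball p r) (Metric.ball q r)) :
    ∀ ℓ : ℕ, 1 ≤ ℓ → ∀ x : X, ∀ p ∈ E, ∀ p' ∈ E,
      {y : X | f^[ℓ] y = x ∧ y ∈ Metric.ball p r ∧ f^[ℓ - 1] y ∈ Metric.ball p' r ∧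
        ∀ j < ℓ, ∃ q ∈ E, f^[j] y ∈ Metric.ball q r}.Subsingleton :=
  unique_backward_branch_near_invariant_set_general f E hinv r hinj hdisj
end

section
/- Let f : ℂ → ℂ be entire, let t < 0, let p ∈ ℂ and n ≥ 1 satisfy f^[n](p) = p and λ := ‖deriv (f^[n]) p‖ > 1, and set P := −(t/n)·log λ. Let ν be a Borel measure on ℂ such that for every measurable set A ⊆ ℂ on which f is injective and on which deriv f is nowhere zero, ν(f(A)) = ∫⁻_{z ∈ A} exp(P + t·log ‖deriv f z‖) dν(z) (lower Lebesgue integral, with the integrand coerced to extended nonnegative reals). If ν(ball(p, s) \ {p}) > 0 for every s > 0, then ν(ball(p, s) \ {p}) = ∞ for every s > 0. -/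
/-!
Write `g = f^[n]`. Near the repelling fixed point `p`, `g` expands distances by a factor
`κ⁻¹ > 1` and covers every small ball `B = ball p r`, so the sets `E k` of points of `B` whose
`g`-orbit leaves `B` exactly at time `k + 1` are disjoint, shrink to `p`, and satisfy
`E k ⊆ g '' E (k + 1)`. Chaining the conformality relation along the orbit shows that the
Jacobian of `ν` under `g` is `(‖g'(z)‖ / ‖g'(p)‖) ^ t` (the choice of `P` normalises it to `1` at
`p`), and since `log ‖g'‖` is Lipschitz near `p` it is at most `exp (C |z - p|)`. Hence
`ν (E k) ≤ exp (C κ ^ (k + 1) r) ν (E (k + 1))`. These factors have a convergent product, so once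
one `E k` has positive mass the masses of all later ones are bounded below, and every punctured
neighbourhood of `p`, which contains all but finitely many `E k`, has infinite mass.
-/

open MeasureTheory Set Metric Filter Topology Function
open scoped ENNReal NNReal

namespace ENNReal

theorem le_ofReal_exp_tsum_mul_of_le_ofReal_exp_mul_succ {x : ℕ → ℝ≥0∞} {a : ℕ → ℝ}
    (ha : Summable a) (ha₀ : ∀ k, 0 ≤ a k)
    (hx : ∀ k, x k ≤ ENNReal.ofReal (Real.exp (a k)) * x (k + 1)) (k m : ℕ) :
    x k ≤ ENNReal.ofReal (Real.exp (∑' i, a i)) * x (k + m) := by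
  have hpartial :
      x k ≤ ENNReal.ofReal (Real.exp (∑ i ∈ Finset.range m, a (k + i))) * x (k + m) := by
    induction m with
    | zero => simp
    | succ m ih =>
      calc x k ≤ ENNReal.ofReal (Real.exp (∑ i ∈ Finset.range m, a (k + i))) * x (k + m) := ih
        _ ≤ ENNReal.ofReal (Real.exp (∑ i ∈ Finset.range m, a (k + i))) *
            (ENNReal.ofReal (Real.exp (a (k + m))) * x (k + m + 1)) := by gcongr; exact hx _
        _ = _ := by
          rw [← mul_assoc, ← ENNReal.ofReal_mul (Real.exp_pos _).le, ← Real.exp_add,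
            Finset.sum_range_succ, add_assoc]
  refine hpartial.trans (mul_le_mul_left ?_ _)
  gcongr
  calc ∑ i ∈ Finset.range m, a (k + i) ≤ ∑' i, a (k + i) :=
        (ha.comp_injective (add_right_injective k)).sum_le_tsum _ fun i _ ↦ ha₀ _
    _ ≤ ∑' i, a i := tsum_comp_le_tsum_of_inj ha ha₀ (add_right_injective k)

theorem tsum_eq_top_of_eventually_le {x : ℕ → ℝ≥0∞} {c : ℝ≥0∞} (hc : c ≠ 0)
    (hx : ∀ᶠ k in atTop, c ≤ x k) : ∑' k, x k = ∞ := by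
  by_contra hsum
  exact hc (le_bot_iff.1 (ge_of_tendsto (tendsto_atTop_zero_of_tsum_ne_top hsum) hx))

theorem tsum_nat_add_eq_top_of_le_ofReal_exp_mul_succ {x : ℕ → ℝ≥0∞} {a : ℕ → ℝ}
    (ha : Summable a) (ha₀ : ∀ k, 0 ≤ a k)
    (hx : ∀ k, x k ≤ ENNReal.ofReal (Real.exp (a k)) * x (k + 1)) {k₀ : ℕ} (hk₀ : x k₀ ≠ 0)
    (N : ℕ) : ∑' m, x (m + N) = ∞ := by
  refine tsum_eq_top_of_eventually_le (c := x k₀ / ENNReal.ofReal (Real.exp (∑' i, a i)))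
    (ENNReal.div_pos hk₀ ofReal_ne_top).ne' ((eventually_ge_atTop k₀).mono fun m hm ↦ ?_)
  rw [ENNReal.div_le_iff_le_mul (.inl (ofReal_pos.2 (Real.exp_pos _)).ne') (.inl ofReal_ne_top),
    mul_comm]
  simpa [show k₀ + (m + N - k₀) = m + N by omega] using
    le_ofReal_exp_tsum_mul_of_le_ofReal_exp_mul_succ ha ha₀ hx k₀ (m + N - k₀)

end ENNReal

section StayingSet

variable {X : Type*} (g : X → X) (B : Set X)

def stayingSet : ℕ → Set X
  | 0 => B
  | k + 1 => B ∩ g ⁻¹' stayingSet k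

def exitSet (k : ℕ) : Set X := stayingSet g B k \ stayingSet g B (k + 1)

variable {g B}

theorem stayingSet_subset (k : ℕ) : stayingSet g B k ⊆ B := by
  cases k with
  | zero => exact subset_rfl
  | succ k => exact inter_subset_left

theorem stayingSet_succ_subset (k : ℕ) : stayingSet g B (k + 1) ⊆ stayingSet g B k := by
  induction k with
  | zero => exact inter_subset_left
  | succ k ih => exact inter_subset_inter_right _ (preimage_mono ih)

theorem stayingSet_antitone : Antitone (stayingSet g B) :=
  antitone_nat_of_succ_le stayingSet_succ_subset

theorem mem_stayingSet_of_isFixedPt {p : X} (hp : g.IsFixedPt p) (hpB : p ∈ B) (k : ℕ) :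
    p ∈ stayingSet g B k := by
  induction k with
  | zero => exact hpB
  | succ k ih => exact ⟨hpB, by rwa [mem_preimage, hp.eq]⟩

theorem isOpen_stayingSet [TopologicalSpace X] (hg : Continuous g) (hB : IsOpen B) (k : ℕ) :
    IsOpen (stayingSet g B k) := by
  induction k with
  | zero => exact hB
  | succ k ih => exact hB.inter (ih.preimage hg)

theorem exitSet_succ (k : ℕ) : exitSet g B (k + 1) = B ∩ g ⁻¹' exitSet g B k := by
  ext z
  simp only [exitSet, stayingSet, Set.mem_sdiff, mem_inter_iff, mem_preimage]
  tauto

theorem exitSet_subset_image_exitSet_succ (hB : B ⊆ g '' B) (k : ℕ) :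
    exitSet g B k ⊆ g '' exitSet g B (k + 1) := by
  intro w hw
  obtain ⟨z, hzB, rfl⟩ := hB (stayingSet_subset k hw.1)
  exact ⟨z, by rw [exitSet_succ]; exact ⟨hzB, hw⟩, rfl⟩

theorem pairwise_disjoint_exitSet : Pairwise (Disjoint on exitSet g B) := by
  have key : ∀ k l, k < l → Disjoint (exitSet g B k) (exitSet g B l) := fun k l hkl ↦
    disjoint_left.2 fun _ hk hl ↦ hk.2 (stayingSet_antitone hkl hl.1)
  intro k l hkl
  rcases hkl.lt_or_gt with h | h
  exacts [key k l h, (key l k h).symm]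

theorem diff_iInter_stayingSet_subset : B \ ⋂ k, stayingSet g B k ⊆ ⋃ k, exitSet g B k := by
  have key : ∀ k, B \ stayingSet g B k ⊆ ⋃ k, exitSet g B k := by
    intro k
    induction k with
    | zero => simp [stayingSet]
    | succ k ih =>
      intro z hz
      by_cases hzk : z ∈ stayingSet g B k
      · exact mem_iUnion.2 ⟨k, hzk, hz.2⟩
      · exact ih ⟨hz.1, hzk⟩
  rw [sdiff_iInter]
  exact iUnion_subset key

theorem stayingSet_ball_subset_closedBall [PseudoMetricSpace X] {p : X} {r κ : ℝ} (hκ : 0 ≤ κ)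
    (hexp : ∀ z ∈ ball p r, dist z p ≤ κ * dist (g z) p) (k : ℕ) :
    stayingSet g (ball p r) k ⊆ closedBall p (κ ^ k * r) := by
  induction k with
  | zero => simpa [stayingSet] using ball_subset_closedBall
  | succ k ih =>
    rintro z ⟨hzB, hgz⟩
    calc dist z p ≤ κ * dist (g z) p := hexp z hzB
      _ ≤ κ * (κ ^ k * r) := by gcongr; exact ih hgz
      _ = κ ^ (k + 1) * r := by ring

theorem iInter_stayingSet_ball_subset [MetricSpace X] {p : X} {r κ : ℝ} (hκ₀ : 0 ≤ κ)
    (hκ₁ : κ < 1) (hexp : ∀ z ∈ ball p r, dist z p ≤ κ * dist (g z) p) :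
    ⋂ k, stayingSet g (ball p r) k ⊆ {p} := by
  intro z hz
  have hlim : Tendsto (fun k : ℕ ↦ κ ^ k * r) atTop (𝓝 0) := by
    simpa using (tendsto_pow_atTop_nhds_zero_of_lt_one hκ₀ hκ₁).mul_const r
  exact dist_le_zero.1 (ge_of_tendsto' hlim fun k ↦
    stayingSet_ball_subset_closedBall hκ₀ hexp k (mem_iInter.1 hz k))

end StayingSet

theorem measure_punctured_ball_eq_top_of_expanding {X : Type*} [MetricSpace X]
    [MeasurableSpace X] [OpensMeasurableSpace X] {g : X → X} (hg : Continuous g) {p : X}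
    (hp : g p = p) {r κ C : ℝ} (hr : 0 < r) (hκ₀ : 0 ≤ κ) (hκ₁ : κ < 1) (hC : 0 ≤ C)
    (hexp : ∀ z ∈ ball p r, dist z p ≤ κ * dist (g z) p) (hsurj : ball p r ⊆ g '' ball p r)
    {ν : Measure X}
    (hν : ∀ A ⊆ ball p r, MeasurableSet A →
      ν (g '' A) ≤ ∫⁻ z in A, ENNReal.ofReal (Real.exp (C * dist z p)) ∂ν)
    (hpos : ν (ball p r \ {p}) ≠ 0) {s : ℝ} (hs : 0 < s) :
    ν (ball p s \ {p}) = ∞ := by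
  set E := exitSet g (ball p r)
  have hE_meas (k : ℕ) : MeasurableSet (E k) :=
    (isOpen_stayingSet hg isOpen_ball k).measurableSet.diff
      (isOpen_stayingSet hg isOpen_ball (k + 1)).measurableSet
  have hE_ball (k : ℕ) : E k ⊆ closedBall p (κ ^ k * r) :=
    sdiff_subset.trans (stayingSet_ball_subset_closedBall hκ₀ hexp k)
  have hstep (k : ℕ) :
      ν (E k) ≤ ENNReal.ofReal (Real.exp (C * (κ ^ (k + 1) * r))) * ν (E (k + 1)) :=
    calc ν (E k) ≤ ν (g '' E (k + 1)) := measure_mono (exitSet_subset_image_exitSet_succ hsurj k)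
      _ ≤ ∫⁻ z in E (k + 1), ENNReal.ofReal (Real.exp (C * dist z p)) ∂ν :=
        hν _ (sdiff_subset.trans (stayingSet_subset _)) (hE_meas _)
      _ ≤ ∫⁻ _ in E (k + 1), ENNReal.ofReal (Real.exp (C * (κ ^ (k + 1) * r))) ∂ν :=
        setLIntegral_mono' (hE_meas _) fun z hz ↦ by gcongr; exact hE_ball _ hz
      _ = _ := setLIntegral_const _ _
  obtain ⟨k₀, hk₀⟩ : ∃ k, ν (E k) ≠ 0 := by
    by_contra! hzero
    refine hpos (measure_mono_null ?_ (measure_iUnion_null hzero))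
    exact (sdiff_subset_sdiff_right (iInter_stayingSet_ball_subset hκ₀ hκ₁ hexp)).trans
      diff_iInter_stayingSet_subset
  obtain ⟨N, hN⟩ : ∃ N : ℕ, κ ^ N * r < s := by
    have hlim : Tendsto (fun k : ℕ ↦ κ ^ k * r) atTop (𝓝 0) := by
      simpa using (tendsto_pow_atTop_nhds_zero_of_lt_one hκ₀ hκ₁).mul_const r
    exact (hlim.eventually (gt_mem_nhds hs)).exists
  have htail : ⋃ m, E (m + N) ⊆ ball p s \ {p} := by
    refine iUnion_subset fun m z hz ↦ ⟨?_, ?_⟩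
    · have hκm : κ ^ (m + N) ≤ κ ^ N := pow_le_pow_of_le_one hκ₀ hκ₁.le (by omega)
      have := mem_closedBall.1 (hE_ball _ hz)
      exact mem_ball.2 (by nlinarith)
    · rintro rfl
      exact hz.2 (mem_stayingSet_of_isFixedPt hp (mem_ball_self hr) _)
  have hsum : Summable fun k : ℕ ↦ C * (κ ^ (k + 1) * r) :=
    ((summable_geometric_of_lt_one hκ₀ hκ₁).comp_injective (add_left_injective 1)).mul_right r
      |>.mul_left C
  refine top_le_iff.1 (le_trans ?_ (measure_mono htail))
  rw [measure_iUnion ((pairwise_disjoint_exitSet).comp_of_injective (add_left_injective N))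
    fun m ↦ hE_meas _, ENNReal.tsum_nat_add_eq_top_of_le_ofReal_exp_mul_succ hsum
    (fun k ↦ by positivity) hstep hk₀ N]

section Calculus

variable {𝕜 : Type*} [NontriviallyNormedField 𝕜] {g : 𝕜 → 𝕜} {g' p : 𝕜}

theorem HasDerivAt.eventually_dist_le_mul_dist_apply (hg : HasDerivAt g g' p) (hp : g p = p)
    {κ : ℝ} (hκ : 1 < κ * ‖g'‖) : ∀ᶠ z in 𝓝 p, dist z p ≤ κ * dist (g z) p := by
  have hκ₀ : 0 < κ := pos_of_mul_pos_left (one_pos.trans hκ) (norm_nonneg _)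
  have hε : 0 < ‖g'‖ - κ⁻¹ := by
    rw [sub_pos, inv_lt_iff_one_lt_mul₀ hκ₀]; linarith
  filter_upwards [(hasDerivAt_iff_isLittleO.1 hg).def hε] with z hz
  rw [hp, smul_eq_mul] at hz
  have hlin : ‖z - p‖ * ‖g'‖ ≤ ‖g z - p‖ + (‖g'‖ - κ⁻¹) * ‖z - p‖ := by
    rw [← norm_mul]
    calc ‖(z - p) * g'‖ = ‖(g z - p) - (g z - p - (z - p) * g')‖ := by ring_nf
      _ ≤ ‖g z - p‖ + ‖g z - p - (z - p) * g'‖ := norm_sub_le _ _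
      _ ≤ _ := by gcongr
  rw [dist_eq_norm, dist_eq_norm]
  have : κ⁻¹ * ‖z - p‖ ≤ ‖g z - p‖ := by linarith
  calc ‖z - p‖ = κ * (κ⁻¹ * ‖z - p‖) := by field_simp
    _ ≤ κ * ‖g z - p‖ := by gcongr

variable [CompleteSpace 𝕜]

theorem HasStrictDerivAt.eventually_ball_subset_image_ball (hg : HasStrictDerivAt g g' p)
    (hp : g p = p) (hg' : 1 < ‖g'‖) : ∀ᶠ r in 𝓝 (0 : ℝ), ball p r ⊆ g '' ball p r := by
  have hg'₀ : g' ≠ 0 := norm_pos_iff.1 (one_pos.trans hg')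
  set h := hg.localInverse g g' p hg'₀
  have hhp : h p = p := by
    simpa [hp] using (hg.eventually_left_inverse hg'₀).self_of_nhds
  have hinv := hg.to_localInverse hg'₀
  rw [hp] at hinv
  obtain ⟨U, hU, hlip⟩ := (hasStrictDerivAt_iff_hasStrictFDerivAt.1 hinv)
    |>.exists_lipschitzOnWith_of_nnnorm_lt 1
      (by simpa [← NNReal.coe_lt_coe] using inv_lt_one_of_one_lt₀ hg')
  have hright := hg.eventually_right_inverse hg'₀
  rw [hp] at hright
  filter_upwards [eventually_ball_subset (inter_mem hU hright)] with r hr y hy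
  refine ⟨h y, mem_ball.2 ?_, (hr hy).2⟩
  calc dist (h y) p = dist (h y) (h p) := by rw [hhp]
    _ ≤ 1 * dist y p := hlip.dist_le_mul _ (hr hy).1 _ (mem_of_mem_nhds hU)
    _ < r := by simpa using hy

theorem HasStrictDerivAt.eventually_smallSets_injOn (hg : HasStrictDerivAt g g' p)
    (hg' : g' ≠ 0) : ∀ᶠ s in (𝓝 p).smallSets, InjOn g s := by
  set e := (hg.hasStrictFDerivAt_equiv hg').toOpenPartialHomeomorph g
  refine (eventually_smallSets' fun s t hst ht ↦ ht.mono hst).2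
    ⟨e.source, e.open_source.mem_nhds ?_, e.injOn⟩
  exact (hg.hasStrictFDerivAt_equiv hg').mem_toOpenPartialHomeomorph_source

end Calculus

theorem deriv_iterate_eq_prod {𝕜 : Type*} [NontriviallyNormedField 𝕜] {f : 𝕜 → 𝕜}
    (hf : Differentiable 𝕜 f) (n : ℕ) (z : 𝕜) :
    deriv f^[n] z = ∏ j ∈ Finset.range n, deriv f (f^[j] z) := by
  induction n with
  | zero => simp
  | succ n ih =>
    rw [iterate_succ', Finset.prod_range_succ, ← ih, mul_comm]
    exact deriv_comp z hf.differentiableAt (hf.iterate n).differentiableAt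

theorem eventually_abs_log_norm_sub_le_of_contDiffAt {E F : Type*} [NormedAddCommGroup E]
    [NormedSpace ℝ E] [NormedAddCommGroup F] [InnerProductSpace ℝ F] {φ : E → F} {p : E}
    (hφ : ContDiffAt ℝ 1 φ p) (hp : φ p ≠ 0) :
    ∃ K : ℝ≥0, ∀ᶠ z in 𝓝 p, |Real.log ‖φ z‖ - Real.log ‖φ p‖| ≤ K * dist z p := by
  obtain ⟨K, U, hU, hlip⟩ := ((hφ.norm ℝ hp).log (norm_ne_zero_iff.2 hp)).exists_lipschitzOnWith
  refine ⟨K, ?_⟩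
  filter_upwards [hU] with z hz
  simpa [Real.dist_eq] using hlip.dist_le_mul z hz p (mem_of_mem_nhds hU)

section WithDensity

variable {X Y : Type*} [MeasurableSpace X] [MeasurableSpace Y]

theorem map_withDensity_comp {μ : Measure X} {F : X → Y} (hF : Measurable F) {ρ : Y → ℝ≥0∞}
    (hρ : Measurable ρ) : (μ.withDensity (ρ ∘ F)).map F = (μ.map F).withDensity ρ := by
  ext s hs
  rw [Measure.map_apply hF hs, withDensity_apply _ (hF hs), withDensity_apply _ hs,
    setLIntegral_map hs hρ hF, Function.comp_def]

theorem map_withDensity_restrict_eq_restrict_image {μ : Measure X} {ν : Measure Y} {F : X → Y}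
    (hF : Measurable F) {J : X → ℝ≥0∞} {A : Set X} (hA : MeasurableSet A)
    (hconf : ∀ B ⊆ A, MeasurableSet B → ν (F '' B) = ∫⁻ z in B, J z ∂μ) :
    ((μ.restrict A).withDensity J).map F = ν.restrict (F '' A) := by
  ext s hs
  rw [Measure.map_apply hF hs, withDensity_apply _ (hF hs), Measure.restrict_restrict (hF hs),
    Measure.restrict_apply hs, ← image_preimage_inter]
  exact (hconf _ inter_subset_right ((hF hs).inter hA)).symm

variable {ν : Measure X} {f : X → X} {J : X → ℝ≥0∞} {A : Set X} {n : ℕ}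

theorem map_iterate_withDensity_prod_eq_restrict_image (hf : Measurable f) (hJ : Measurable J)
    (hA : ∀ j < n, MeasurableSet (f^[j] '' A))
    (hconf : ∀ j < n, ∀ B ⊆ f^[j] '' A, MeasurableSet B → ν (f '' B) = ∫⁻ z in B, J z ∂ν) :
    ((ν.restrict A).withDensity fun z ↦ ∏ j ∈ Finset.range n, J (f^[j] z)).map f^[n] =
      ν.restrict (f^[n] '' A) := by
  induction n with
  | zero => simp
  | succ n ih =>
    have hprod : Measurable fun z ↦ ∏ j ∈ Finset.range n, J (f^[j] z) :=
      Finset.measurable_prod _ fun j _ ↦ hJ.comp (hf.iterate j)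
    have hsplit : (fun z ↦ ∏ j ∈ Finset.range (n + 1), J (f^[j] z)) =
        (fun z ↦ ∏ j ∈ Finset.range n, J (f^[j] z)) * (J ∘ f^[n]) := by
      ext z; simp [Finset.prod_range_succ]
    rw [hsplit, withDensity_mul _ hprod (hJ.comp (hf.iterate n)), iterate_succ',
      ← Measure.map_map hf (hf.iterate n), map_withDensity_comp (hf.iterate n) hJ,
      ih (fun j hj ↦ hA j (by omega)) (fun j hj ↦ hconf j (by omega)),
      map_withDensity_restrict_eq_restrict_image hf (hA n (by omega)) (hconf n (by omega)),
      image_comp]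

theorem measure_image_iterate_eq_lintegral_prod (hf : Measurable f) (hJ : Measurable J)
    (hA : ∀ j < n, MeasurableSet (f^[j] '' A))
    (hconf : ∀ j < n, ∀ B ⊆ f^[j] '' A, MeasurableSet B → ν (f '' B) = ∫⁻ z in B, J z ∂ν) :
    ν (f^[n] '' A) = ∫⁻ z in A, ∏ j ∈ Finset.range n, J (f^[j] z) ∂ν := by
  rw [← Measure.restrict_apply_univ,
    ← map_iterate_withDensity_prod_eq_restrict_image hf hJ hA hconf,
    Measure.map_apply (hf.iterate n) .univ, preimage_univ, withDensity_apply _ .univ,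
    Measure.restrict_univ]

end WithDensity

theorem injOn_iterate_of_injOn_image_iterate {α : Type*} {f : α → α} {s : Set α} {n : ℕ}
    (h : ∀ j < n, InjOn f (f^[j] '' s)) : InjOn f^[n] s := by
  induction n with
  | zero => exact injOn_id s
  | succ n ih =>
    rw [iterate_succ']
    exact (h n (by omega)).comp (ih fun j hj ↦ h j (by omega)) (mapsTo_image _ _)

theorem prod_ofReal_exp_add_mul_log_norm_deriv_iterate {𝕜 : Type*} [NontriviallyNormedField 𝕜]
    {f : 𝕜 → 𝕜} (hf : Differentiable 𝕜 f) (P t : ℝ) {n : ℕ} {z : 𝕜}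
    (hz : ∀ j < n, deriv f (f^[j] z) ≠ 0) :
    ∏ j ∈ Finset.range n, ENNReal.ofReal (Real.exp (P + t * Real.log ‖deriv f (f^[j] z)‖)) =
      ENNReal.ofReal (Real.exp (n * P + t * Real.log ‖deriv f^[n] z‖)) := by
  have hlog : Real.log ‖deriv f^[n] z‖ = ∑ j ∈ Finset.range n, Real.log ‖deriv f (f^[j] z)‖ := by
    rw [deriv_iterate_eq_prod hf, norm_prod, Real.log_prod]
    exact fun j hj ↦ norm_ne_zero_iff.2 (hz j (Finset.mem_range.1 hj))
  rw [← ENNReal.ofReal_prod_of_nonneg fun _ _ ↦ (Real.exp_pos _).le, ← Real.exp_sum,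
    Finset.sum_add_distrib, ← Finset.mul_sum, hlog]
  simp

section Conformal

variable {f : ℂ → ℂ} {ν : Measure ℂ} {P t : ℝ}

theorem measure_image_iterate_eq_lintegral_of_conformal (hf : Differentiable ℂ f)
    (hconf : ∀ A : Set ℂ, MeasurableSet A → InjOn f A → (∀ z ∈ A, deriv f z ≠ 0) →
      ν (f '' A) = ∫⁻ z in A, ENNReal.ofReal (Real.exp (P + t * Real.log ‖deriv f z‖)) ∂ν)
    {n : ℕ} {s : Set ℂ} (hinj : ∀ j < n, InjOn f (f^[j] '' s))
    (hderiv : ∀ z ∈ s, ∀ j < n, deriv f (f^[j] z) ≠ 0) {A : Set ℂ} (hAs : A ⊆ s)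
    (hA : MeasurableSet A) :
    ν (f^[n] '' A) =
      ∫⁻ z in A, ENNReal.ofReal (Real.exp (n * P + t * Real.log ‖deriv f^[n] z‖)) ∂ν := by
  have hJ : Measurable fun z ↦ ENNReal.ofReal (Real.exp (P + t * Real.log ‖deriv f z‖)) := by
    have := (hf.contDiff (n := 1)).continuous_deriv le_rfl
    fun_prop
  have hmeas (j : ℕ) (hj : j < n) : MeasurableSet (f^[j] '' A) :=
    hA.image_of_continuousOn_injOn (hf.iterate j).continuous.continuousOn
      ((injOn_iterate_of_injOn_image_iterate fun i hi ↦ hinj i (by omega)).mono hAs)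
  have hconf' (j : ℕ) (hj : j < n) (B : Set ℂ) (hB : B ⊆ f^[j] '' A) (hBm : MeasurableSet B) :
      ν (f '' B) = ∫⁻ z in B, ENNReal.ofReal (Real.exp (P + t * Real.log ‖deriv f z‖)) ∂ν := by
    refine hconf B hBm ((hinj j hj).mono (hB.trans (image_mono hAs))) fun w hw ↦ ?_
    obtain ⟨z, hz, rfl⟩ := hB hw
    exact hderiv z (hAs hz) j hj
  rw [measure_image_iterate_eq_lintegral_prod hf.continuous.measurable hJ hmeas hconf']
  exact setLIntegral_congr_fun hA fun z hz ↦
    prod_ofReal_exp_add_mul_log_norm_deriv_iterate hf P t (hderiv z (hAs hz))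

theorem exists_eventually_measure_image_iterate_le (hf : Differentiable ℂ f)
    (hconf : ∀ A : Set ℂ, MeasurableSet A → InjOn f A → (∀ z ∈ A, deriv f z ≠ 0) →
      ν (f '' A) = ∫⁻ z in A, ENNReal.ofReal (Real.exp (P + t * Real.log ‖deriv f z‖)) ∂ν)
    {n : ℕ} {p : ℂ} (hp : deriv f^[n] p ≠ 0) (hP : n * P = -t * Real.log ‖deriv f^[n] p‖) :
    ∃ C ≥ 0, ∀ᶠ s in (𝓝 p).smallSets, ∀ A ⊆ s, MeasurableSet A →
      ν (f^[n] '' A) ≤ ∫⁻ z in A, ENNReal.ofReal (Real.exp (C * dist z p)) ∂ν := by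
  have hdf : Continuous (deriv f) := (hf.contDiff (n := 1)).continuous_deriv le_rfl
  obtain ⟨K, hK⟩ := eventually_abs_log_norm_sub_le_of_contDiffAt
    (((hf.iterate n).contDiff (n := 2)).deriv' (𝕜 := ℂ) |>.restrict_scalars ℝ).contDiffAt hp
  have horbit_p (j : ℕ) (hj : j < n) : deriv f (f^[j] p) ≠ 0 := by
    rw [deriv_iterate_eq_prod hf] at hp
    exact fun h0 ↦ hp (Finset.prod_eq_zero (Finset.mem_range.2 hj) h0)
  have hinj : ∀ᶠ s in (𝓝 p).smallSets, ∀ j < n, InjOn f (f^[j] '' s) :=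
    (eventually_all_finite (finite_Iio n)).2 fun j hj ↦
      ((hf.iterate j).continuous.tendsto p).image_smallSets.eventually
        ((hf.contDiff (n := 1)).contDiffAt.hasStrictDerivAt one_ne_zero
          |>.eventually_smallSets_injOn (horbit_p j hj))
  have horbit : ∀ᶠ z in 𝓝 p, ∀ j < n, deriv f (f^[j] z) ≠ 0 :=
    (eventually_all_finite (finite_Iio n)).2 fun j hj ↦
      (hdf.comp (hf.iterate j).continuous).continuousAt.eventually_ne (horbit_p j hj)
  refine ⟨|t| * K, by positivity, ?_⟩
  filter_upwards [hinj, horbit.smallSets, hK.smallSets] with s hs_inj hs_orbit hs_K A hAs hA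
  rw [measure_image_iterate_eq_lintegral_of_conformal hf hconf hs_inj hs_orbit hAs hA]
  refine setLIntegral_mono' hA fun z hz ↦ ?_
  gcongr
  calc n * P + t * Real.log ‖deriv f^[n] z‖
      = t * (Real.log ‖deriv f^[n] z‖ - Real.log ‖deriv f^[n] p‖) := by rw [hP]; ring
    _ ≤ |t| * |Real.log ‖deriv f^[n] z‖ - Real.log ‖deriv f^[n] p‖| := by
      rw [← abs_mul]; exact le_abs_self _
    _ ≤ |t| * (K * dist z p) := by gcongr; exact hs_K z (hAs hz)
    _ = |t| * K * dist z p := by ring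

end Conformal

theorem conformal_measure_infinite_near_exceptional_point_general
    (f : ℂ → ℂ) (hf : Differentiable ℂ f) (t : ℝ)
    (p : ℂ) (n : ℕ) (hper : f^[n] p = p)
    (hrep : 1 < ‖deriv (f^[n]) p‖)
    (P : ℝ) (hP : P = -(t / n) * Real.log ‖deriv (f^[n]) p‖)
    (ν : Measure ℂ)
    (hconf : ∀ A : Set ℂ, MeasurableSet A → Set.InjOn f A → (∀ z ∈ A, deriv f z ≠ 0) →
      ν (f '' A) = ∫⁻ z in A, ENNReal.ofReal (Real.exp (P + t * Real.log ‖deriv f z‖)) ∂ν)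
    (hpos : ∀ s > 0, 0 < ν (Metric.ball p s \ {p})) :
    ∀ s > 0, ν (Metric.ball p s \ {p}) = ⊤ := by
  have hn : (n : ℝ) ≠ 0 := by rintro h; simp [Nat.cast_eq_zero.1 h] at hrep
  obtain ⟨C, hC, hjac⟩ := exists_eventually_measure_image_iterate_le hf hconf
    (norm_pos_iff.1 (one_pos.trans hrep)) (by rw [hP]; field_simp)
  have hderiv : HasStrictDerivAt f^[n] (deriv f^[n] p) p :=
    ((hf.iterate n).contDiff (n := 1)).contDiffAt.hasStrictDerivAt one_ne_zero
  -- any `κ` with `‖deriv f^[n] p‖⁻¹ < κ < 1` works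
  set κ := 2 / (1 + ‖deriv f^[n] p‖)
  have hκ₀ : 0 ≤ κ := by positivity
  have hκ₁ : κ < 1 := by rw [div_lt_one (by positivity)]; linarith
  have hκL : 1 < κ * ‖deriv f^[n] p‖ := by
    rw [div_mul_eq_mul_div, one_lt_div (by positivity)]; linarith
  have hexp := (hderiv.hasDerivAt.eventually_dist_le_mul_dist_apply hper hκL).smallSets
  have hsurj : ∀ᶠ r in 𝓝[>] 0, ball p r ⊆ f^[n] '' ball p r :=
    (hderiv.eventually_ball_subset_image_ball hper hrep).filter_mono nhdsWithin_le_nhds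
  have hballs : Tendsto (ball p) (𝓝[>] 0) (𝓝 p).smallSets :=
    tendsto_smallSets_iff.2 fun _ hU ↦ (eventually_ball_subset hU).filter_mono nhdsWithin_le_nhds
  obtain ⟨r, hr, hsurj_r, hexp_r, hjac_r⟩ :=
    (eventually_mem_nhdsWithin.and <| hsurj.and <| hballs.eventually <| hexp.and hjac).exists
  exact fun s hs ↦ measure_punctured_ball_eq_top_of_expanding (hf.iterate n).continuous hper hr
    hκ₀ hκ₁ hC hexp_r hsurj_r hjac_r (hpos r hr).ne' hs

/-- Part 2 of Proposition 2.2: if `ν` is `e^{P - φ_t}`-conformal outside the critical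
set for an entire map `f` with a repelling periodic point `p` of exponent `χ(p)` and
`P = -t·χ(p)`, `t < 0`, and `ν` gives positive mass to every punctured neighborhood
of `p`, then it gives infinite mass to every punctured neighborhood of `p`. -/
theorem conformal_measure_infinite_near_exceptional_point
    (f : ℂ → ℂ) (hf : Differentiable ℂ f) (t : ℝ) (ht : t < 0)
    (p : ℂ) (n : ℕ) (hn : 1 ≤ n) (hper : f^[n] p = p)
    (hrep : 1 < ‖deriv (f^[n]) p‖)
    (P : ℝ) (hP : P = -(t / n) * Real.log ‖deriv (f^[n]) p‖)
    (ν : Measure ℂ)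
    (hconf : ∀ A : Set ℂ, MeasurableSet A → Set.InjOn f A → (∀ z ∈ A, deriv f z ≠ 0) →
      ν (f '' A) = ∫⁻ z in A, ENNReal.ofReal (Real.exp (P + t * Real.log ‖deriv f z‖)) ∂ν)
    (hpos : ∀ s > 0, 0 < ν (Metric.ball p s \ {p})) :
    ∀ s > 0, ν (Metric.ball p s \ {p}) = ⊤ :=
  conformal_measure_infinite_near_exceptional_point_general f hf t p n hper hrep P hP ν hconf hpos
end
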